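/- arXiv:1704.01998 — 2 statements merged into one kernel-verified Lean document; each statement's English description precedes it below -/
import Mathlib

section
/- Let S ⊆ {1,…,n}, θ ∈ ℝ, and let ⟨1_θ| be the conjugate-transpose of |1_θ⟩ = (1/√2)(e^{−iθ}|+⟩ − e^{iθ}|−⟩). Then, as linear maps on ℂ^(2^n): Z_S ∘ (I_{2^n} ⊗ ⟨1_θ|) ∘ CZ_S ∘ (I_{2^n} ⊗ |+⟩) = (1/√2) · exp(i·θ·Z_S). That is, with measurement outcome 1 the circuit of Figure 1 implements exp(iθ Z_S) up to normalization 1/√2 after applying the Pauli-Z correction Z_S to the unmeasured qubits (Lemma 1, outcome-1 branch). -/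
open Matrix Complex

noncomputable section

/-- The single-qubit Pauli-Z matrix `diag(1, -1)`. -/
def qZ : Matrix (ZMod 2) (ZMod 2) ℂ :=
  Matrix.diagonal (fun b => if b = 0 then 1 else -1)

/-- The single-qubit Pauli-X matrix `[[0,1],[1,0]]`. -/
def qX : Matrix (ZMod 2) (ZMod 2) ℂ :=
  Matrix.of fun b c => if b = c then 0 else 1

/-- The single-qubit Hadamard matrix `(1/√2)·[[1,1],[1,-1]]`. -/
def qH : Matrix (ZMod 2) (ZMod 2) ℂ :=
  Matrix.of fun b c => ((Real.sqrt 2 : ℂ))⁻¹ * (-1) ^ (b.val * c.val)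

/-- Kronecker product over `j : Fin n` of single-qubit matrices, as a matrix
on the `n`-qubit space indexed by bitstrings `Fin n → ZMod 2`. -/
def kron {n : ℕ} (M : Fin n → Matrix (ZMod 2) (ZMod 2) ℂ) :
    Matrix (Fin n → ZMod 2) (Fin n → ZMod 2) ℂ :=
  Matrix.of fun p q => ∏ j, M j (p j) (q j)

/-- `Z_S`: Pauli-Z on every qubit in `S`, identity elsewhere. -/
def ZS {n : ℕ} (S : Finset (Fin n)) : Matrix (Fin n → ZMod 2) (Fin n → ZMod 2) ℂ :=
  kron (fun j => if j ∈ S then qZ else 1)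

/-- `X_S`: Pauli-X on every qubit in `S`, identity elsewhere. -/
def XS {n : ℕ} (S : Finset (Fin n)) : Matrix (Fin n → ZMod 2) (Fin n → ZMod 2) ℂ :=
  kron (fun j => if j ∈ S then qX else 1)

/-- `H^{⊗n}`, the `n`-fold Kronecker power of the Hadamard matrix. -/
def HN (n : ℕ) : Matrix (Fin n → ZMod 2) (Fin n → ZMod 2) ℂ :=
  kron (fun _ => qH)

/-- The computational basis state `|p⟩`. -/
def ket {n : ℕ} (p : Fin n → ZMod 2) : (Fin n → ZMod 2) → ℂ :=
  Pi.single p 1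

/-- The parity `π_S(p) = ∑_{j ∈ S} p_j (mod 2)`. -/
def parity {n : ℕ} (S : Finset (Fin n)) (p : Fin n → ZMod 2) : ZMod 2 :=
  ∑ j ∈ S, p j
/-- The single-qubit computational basis state `|b⟩`. -/
def ketb (b : ZMod 2) : ZMod 2 → ℂ := Pi.single b 1

/-- The single-qubit state `|+⟩ = (|0⟩ + |1⟩)/√2`. -/
def bplus : ZMod 2 → ℂ :=
  ((Real.sqrt 2 : ℂ))⁻¹ • (ketb 0 + ketb 1)

/-- The single-qubit state `|−⟩ = (|0⟩ − |1⟩)/√2`. -/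
def bminus : ZMod 2 → ℂ :=
  ((Real.sqrt 2 : ℂ))⁻¹ • (ketb 0 - ketb 1)

/-- Tensor product of an `n`-qubit vector with a single-qubit (ancilla) vector. -/
def tensV {n : ℕ} (v : (Fin n → ZMod 2) → ℂ) (w : ZMod 2 → ℂ) :
    (Fin n → ZMod 2) × ZMod 2 → ℂ :=
  fun x => v x.1 * w x.2

/-- `CZ_S`: the product over `j ∈ S` of controlled-Z gates between qubit `j`
and the `(n+1)`-st (ancilla) qubit. -/
def CZS {n : ℕ} (S : Finset (Fin n)) :
    Matrix ((Fin n → ZMod 2) × ZMod 2) ((Fin n → ZMod 2) × ZMod 2) ℂ :=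
  Matrix.diagonal (fun x => ∏ j ∈ S, (-1 : ℂ) ^ ((x.1 j).val * x.2.val))

/-- The θ-basis state `|s_θ⟩ = (1/√2)(e^{−iθ}|+⟩ + (−1)^s e^{iθ}|−⟩)`. -/
def ketθ (s : ZMod 2) (θ : ℝ) : ZMod 2 → ℂ :=
  ((Real.sqrt 2 : ℂ))⁻¹ •
    (Complex.exp (-(Complex.I * θ)) • bplus +
      ((-1 : ℂ) ^ s.val * Complex.exp (Complex.I * θ)) • bminus)

/-- The map `v ↦ v ⊗ |+⟩` adjoining an ancilla in state `|+⟩`, as a matrix. -/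
def injPlus (n : ℕ) : Matrix ((Fin n → ZMod 2) × ZMod 2) (Fin n → ZMod 2) ℂ :=
  Matrix.of fun x q => (if x.1 = q then 1 else 0) * bplus x.2

/-- The contraction of the ancilla with the bra `⟨s_θ|`, as a matrix. -/
def projθ (n : ℕ) (s : ZMod 2) (θ : ℝ) :
    Matrix (Fin n → ZMod 2) ((Fin n → ZMod 2) × ZMod 2) ℂ :=
  Matrix.of fun q x => (if q = x.1 then 1 else 0) * (starRingEnd ℂ) (ketθ s θ x.2)

/-!
Everything is diagonal in the computational basis of the system qubits. On `|p⟩`, where `Z_S`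
has eigenvalue `σ = ±1`, `CZ_S` sends the ancilla `|+⟩` to `|+⟩` (`σ = 1`) or `|−⟩` (`σ = -1`),
whose overlaps with `⟨1_θ|` are `e^{iθ}/√2` and `-e^{-iθ}/√2`. The correction `Z_S` multiplies
by `σ`, leaving `e^{iθσ}/√2`, the eigenvalue of `exp(iθ Z_S)/√2` on `|p⟩`.
-/

lemma ZMod.two_eq_zero_or_one (b : ZMod 2) : b = 0 ∨ b = 1 := by
  revert b; decide

lemma sum_ZMod_two (f : ZMod 2 → ℂ) : ∑ b, f b = f 0 + f 1 := by
  exact Fin.sum_univ_two f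

/-- The eigenvalue of `Z_S` on the basis state `|p⟩`. -/
def zSign {n : ℕ} (S : Finset (Fin n)) (p : Fin n → ZMod 2) : ℂ :=
  ∏ j ∈ S, (-1) ^ (p j).val

lemma zSign_eq_one_or_neg_one {n : ℕ} (S : Finset (Fin n)) (p : Fin n → ZMod 2) :
    zSign S p = 1 ∨ zSign S p = -1 := by
  rw [zSign, Finset.prod_pow_eq_pow_sum]
  exact neg_one_pow_eq_or ℂ _

lemma qZ_apply (b c : ZMod 2) : qZ b c = if b = c then (-1) ^ b.val else 0 := by
  rcases ZMod.two_eq_zero_or_one b with rfl | rfl <;>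
    rcases ZMod.two_eq_zero_or_one c with rfl | rfl <;> simp [qZ, ZMod.val_one]

lemma ZS_eq_diagonal {n : ℕ} (S : Finset (Fin n)) : ZS S = diagonal (zSign S) := by
  ext p q
  by_cases hpq : p = q
  · subst hpq
    simp only [ZS, kron, of_apply, diagonal_apply_eq, zSign, ← Fintype.prod_ite_mem S]
    refine Finset.prod_congr rfl fun j _ => ?_
    split_ifs <;> simp [qZ_apply]
  · obtain ⟨j, hj⟩ := Function.ne_iff.mp hpq
    rw [diagonal_apply_ne _ hpq]
    refine Finset.prod_eq_zero (Finset.mem_univ j) ?_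
    dsimp only
    split_ifs <;> simp [qZ_apply, hj]

lemma CZS_eq_diagonal {n : ℕ} (S : Finset (Fin n)) :
    CZS S = diagonal (fun x => zSign S x.1 ^ x.2.val) := by
  simp only [CZS, zSign, ← Finset.prod_pow, pow_mul]

lemma projθ_mul_diagonal_mul_injPlus (n : ℕ) (s : ZMod 2) (θ : ℝ)
    (d : (Fin n → ZMod 2) × ZMod 2 → ℂ) :
    projθ n s θ * diagonal d * injPlus n
      = diagonal (fun p => ∑ b, starRingEnd ℂ (ketθ s θ b) * d (p, b) * bplus b) := by
  ext p q
  rw [mul_apply, Fintype.sum_prod_type]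
  simp only [mul_diagonal, projθ, injPlus, of_apply, diagonal_apply]
  split_ifs with hpq
  · subst hpq
    simp
  · simp [hpq]

lemma bplus_apply (b : ZMod 2) : bplus b = (Real.sqrt 2 : ℂ)⁻¹ := by
  rcases ZMod.two_eq_zero_or_one b with rfl | rfl <;> simp [bplus, ketb]

lemma bminus_apply (b : ZMod 2) : bminus b = (Real.sqrt 2 : ℂ)⁻¹ * (-1) ^ b.val := by
  rcases ZMod.two_eq_zero_or_one b with rfl | rfl <;> simp [bminus, ketb, ZMod.val_one]

lemma ketθ_one_apply (θ : ℝ) (b : ZMod 2) :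
    ketθ 1 θ b = 2⁻¹ * (Complex.exp (-(I * θ)) - (-1) ^ b.val * Complex.exp (I * θ)) := by
  have hsqrt : (Real.sqrt 2 : ℂ)⁻¹ * (Real.sqrt 2 : ℂ)⁻¹ = 2⁻¹ := by
    rw [← mul_inv, ← ofReal_mul, Real.mul_self_sqrt zero_le_two, ofReal_ofNat]
  simp only [ketθ, Pi.smul_apply, Pi.add_apply, bplus_apply, bminus_apply, smul_eq_mul,
    ZMod.val_one, pow_one, ← hsqrt]
  ring

/-- `σ = ±1` is the phase that `CZ_S` puts on the `|1⟩` component of the ancilla. -/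
lemma sum_conj_ketθ_one_mul_bplus (θ : ℝ) {σ : ℂ} (hσ : σ = 1 ∨ σ = -1) :
    ∑ b, starRingEnd ℂ (ketθ 1 θ b) * σ ^ b.val * bplus b
      = (Real.sqrt 2 : ℂ)⁻¹ * σ * Complex.exp (I * θ * σ) := by
  have hconj : ∀ b : ZMod 2, starRingEnd ℂ (ketθ 1 θ b)
      = 2⁻¹ * (Complex.exp (I * θ) - (-1) ^ b.val * Complex.exp (-(I * θ))) := by
    intro b
    simp [ketθ_one_apply, ← Complex.exp_conj, map_ofNat]
  simp only [sum_ZMod_two, hconj, bplus_apply, ZMod.val_zero, ZMod.val_one, pow_zero, pow_one]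
  rcases hσ with rfl | rfl <;> simp only [mul_one, mul_neg_one] <;> ring

lemma NormedSpace.exp_smul_diagonal {m : Type*} [Fintype m] [DecidableEq m] (c : ℂ)
    (d : m → ℂ) :
    NormedSpace.exp (c • diagonal d) = diagonal (fun i => Complex.exp (c * d i)) := by
  rw [← diagonal_smul, Matrix.exp_diagonal, Pi.exp_def, ← Complex.exp_eq_exp_ℂ]
  rfl

/-- The circuit of Figure 1 with ancilla measurement outcome `1`, followed by the
Pauli-Z correction `Z_S`, implements `exp(iθ Z_S)` up to normalization `1/√2`. -/
theorem stmt_8 (n : ℕ) (S : Finset (Fin n)) (θ : ℝ) :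
    ZS S * (projθ n 1 θ * CZS S * injPlus n)
      = ((Real.sqrt 2 : ℂ))⁻¹ • NormedSpace.exp ((Complex.I * (θ : ℂ)) • ZS S) := by
  rw [ZS_eq_diagonal, CZS_eq_diagonal, projθ_mul_diagonal_mul_injPlus,
    NormedSpace.exp_smul_diagonal, diagonal_mul_diagonal, ← diagonal_smul]
  congr 1
  funext p
  have hσ := zSign_eq_one_or_neg_one S p
  rw [sum_conj_ketθ_one_mul_bplus θ hσ, Pi.smul_apply, smul_eq_mul]
  rcases hσ with h | h <;> rw [h] <;> ring
end
end

section
/- For each ε ∈ {+1, −1}, the following 4×4 matrix identity holds: (1/√2)(I⊗I − ε·i·Z⊗Z) · cZ = e^{−iεπ/4} · (S^ε ⊗ S^ε), where S^{+1} = S = diag(1,i) and S^{−1} = S† = diag(1,−i). Hence applying the residual operator of the Y-basis bridge measurement after the controlled-Z between the bridged neighbours leaves exactly a phase-gate correction S^ε on each neighbour, up to the global phase e^{−iεπ/4}. -/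
/-!
All matrices involved are diagonal in the computational basis. With `u = εi`, the gate `S^ε` is
`diag(1, u)` and `e^{−iεπ/4} = (1 − u)/√2`, so it suffices that
`(I⊗I − u·Z⊗Z)·cZ = (1 − u)·(diag(1, u) ⊗ diag(1, u))`, which holds entrywise whenever `u² = −1`.
-/

open Matrix Kronecker Complex

noncomputable section

/-- The 2×2 identity matrix. -/
def I2 : Matrix (ZMod 2) (ZMod 2) ℂ := 1

/-- The phase gate `S = diag(1, i)`. -/
def qS : Matrix (ZMod 2) (ZMod 2) ℂ :=
  Matrix.diagonal (fun b => if b = 0 then 1 else Complex.I)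

/-- The two-qubit controlled-Z gate `diag(1,1,1,−1)`, acting as `−1` exactly on
the basis state `|11⟩`. -/
def cZ2 : Matrix (ZMod 2 × ZMod 2) (ZMod 2 × ZMod 2) ℂ :=
  Matrix.diagonal (fun x => if x.1 = 1 ∧ x.2 = 1 then -1 else 1)

def phaseGate (u : ℂ) : Matrix (ZMod 2) (ZMod 2) ℂ :=
  diagonal fun b => if b = 0 then 1 else u

lemma phaseGate_mul_phaseGate (u v : ℂ) : phaseGate u * phaseGate v = phaseGate (u * v) := by
  rw [phaseGate, phaseGate, phaseGate, diagonal_mul_diagonal]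
  congr 1
  ext b
  split_ifs <;> simp

lemma phaseGate_one : phaseGate 1 = 1 := by
  simp [phaseGate]

lemma qS_zpow_eq_phaseGate {ε : ℤ} (hε : ε = 1 ∨ ε = -1) : qS ^ ε = phaseGate (ε * I) := by
  rcases hε with rfl | rfl
  · simp [qS, phaseGate]
  · rw [Matrix.zpow_neg_one]
    refine inv_eq_left_inv ?_
    rw [qS, ← phaseGate, phaseGate_mul_phaseGate]
    simp [phaseGate_one]

lemma exp_neg_mul_I_pi_div_four {ε : ℤ} (hε : ε = 1 ∨ ε = -1) :
    exp (-(ε : ℂ) * I * (Real.pi / 4)) = (1 - ε * I) / (Real.sqrt 2 : ℂ) := by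
  have hcos : Real.cos (-ε * (Real.pi / 4)) = Real.sqrt 2 / 2 := by
    rcases hε with rfl | rfl <;> simp [Real.cos_pi_div_four]
  have hsin : Real.sin (-ε * (Real.pi / 4)) = -ε * (Real.sqrt 2 / 2) := by
    rcases hε with rfl | rfl <;> simp [Real.sin_pi_div_four]
  have hsq : (Real.sqrt 2 : ℂ) ^ 2 = 2 := by norm_cast; simp
  rw [eq_div_iff (by simp), show -(ε : ℂ) * I * (Real.pi / 4) = ((-ε * (Real.pi / 4) : ℝ) : ℂ) * I by
    push_cast; ring, exp_mul_I, ← ofReal_cos, ← ofReal_sin, hcos, hsin]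
  push_cast
  linear_combination (1 - ε * I) / 2 * hsq

lemma sub_smul_kronecker_mul_cZ2 {u : ℂ} (hu : u ^ 2 = -1) :
    (I2 ⊗ₖ I2 - u • (qZ ⊗ₖ qZ)) * cZ2 = (1 - u) • (phaseGate u ⊗ₖ phaseGate u) := by
  rw [I2, ← diagonal_one, qZ, cZ2, phaseGate, diagonal_kronecker_diagonal,
    diagonal_kronecker_diagonal, diagonal_kronecker_diagonal, ← diagonal_smul, diagonal_sub,
    diagonal_mul_diagonal, ← diagonal_smul]
  congr 1
  ext ⟨a, b⟩
  fin_cases a <;> fin_cases b <;> simp +decide <;> grind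

/-- For `ε ∈ {+1, −1}`:
`(1/√2)(I⊗I − ε·i·Z⊗Z) · cZ = e^{−iεπ/4} · (S^ε ⊗ S^ε)`. -/
theorem stmt_14 (ε : ℤ) (hε : ε = 1 ∨ ε = -1) :
    (((Real.sqrt 2 : ℂ))⁻¹ • (I2 ⊗ₖ I2 - ((ε : ℂ) * Complex.I) • (qZ ⊗ₖ qZ))) * cZ2
      = Complex.exp (-(ε : ℂ) * Complex.I * (Real.pi / 4)) • ((qS ^ ε) ⊗ₖ (qS ^ ε)) := by
  have hu : ((ε : ℂ) * I) ^ 2 = -1 := by rcases hε with rfl | rfl <;> simp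
  rw [smul_mul_assoc, sub_smul_kronecker_mul_cZ2 hu, qS_zpow_eq_phaseGate hε,
    exp_neg_mul_I_pi_div_four hε, smul_smul, div_eq_inv_mul]
end
end
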